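/- There exists a constant C > 0 such that for every real μ ≥ 1/2 and every real r ≥ 1, one has K_μ(r) ≤ C · e^{-r} r^{-μ} · Γ(μ + 1/2)^{-1} · max( (2r)^{μ - 1/2} Γ(μ + 1/2), Γ(2μ) ). -/
import Mathlib


open Real
open MeasureTheory Set

lemma shift_Ioi (f : ℝ → ℝ) :
    ∫ t in Set.Ioi (1:ℝ), f t = ∫ s in Set.Ioi (0:ℝ), f (s + 1) := by
  rw [← integral_indicator measurableSet_Ioi, ← integral_indicator measurableSet_Ioi,
    ← integral_add_right_eq_self (fun x => Set.indicator (Set.Ioi 1) f x) 1]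
  congr 1
  ext x
  by_cases h : x ∈ Set.Ioi (0:ℝ)
  · rw [Set.indicator_of_mem h, Set.indicator_of_mem (by simpa using h)]
  · rw [Set.indicator_of_notMem h, Set.indicator_of_notMem (by simpa using h)]

lemma integrable_aux {p r : ℝ} (hp : 0 ≤ p) (hr : 1 ≤ r) :
    MeasureTheory.IntegrableOn (fun s : ℝ => s ^ p * Real.exp (-(r * s))) (Set.Ioi 0) := by
  have h := Real.GammaIntegral_convergent (show 0 < p + 1 by linarith)
  simp only [add_sub_cancel_right] at h
  refine h.mono' ?_ ?_
  · refine ContinuousOn.aestronglyMeasurable ?_ measurableSet_Ioi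
    refine (continuousOn_id.rpow_const fun x hx => Or.inl ?_).mul
      ((continuous_const.mul continuous_id).neg.rexp).continuousOn
    exact ne_of_gt hx
  · filter_upwards [ae_restrict_mem measurableSet_Ioi] with s hs
    have hs0 : (0:ℝ) < s := hs
    rw [Real.norm_eq_abs, abs_of_nonneg (by positivity)]
    rw [mul_comm (Real.exp (-s))]
    have : Real.exp (-(r * s)) ≤ Real.exp (-s) := Real.exp_le_exp.2 (by nlinarith)
    have hsp : (0:ℝ) ≤ s ^ p := Real.rpow_nonneg hs0.le p
    nlinarith [Real.exp_pos (-(r*s)), Real.exp_pos (-s)]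

lemma I_bound {μ r : ℝ} (hμ : 1/2 ≤ μ) (hr : 1 ≤ r) :
    ∫ t in Set.Ioi (1:ℝ), Real.exp (-r * t) * (t ^ 2 - 1) ^ (μ - 1/2) ≤
      Real.exp (-r) * ((2:ℝ) ^ (μ - 1/2) * ((1/r) ^ (2*μ) * Real.Gamma (2*μ)) +
        (4:ℝ) ^ (μ - 1/2) * ((1/r) ^ (μ + 1/2) * Real.Gamma (μ + 1/2))) := by
  have hr0 : (0:ℝ) < r := by linarith
  set a := μ - 1/2 with ha
  have ha0 : 0 ≤ a := by simp [ha]; linarith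
  rw [shift_Ioi]
  have hInt1 : MeasureTheory.IntegrableOn (fun s : ℝ => s ^ (2*a) * Real.exp (-(r*s)))
      (Set.Ioi 0) := integrable_aux (by linarith) hr
  have hInt2 : MeasureTheory.IntegrableOn (fun s : ℝ => s ^ a * Real.exp (-(r*s)))
      (Set.Ioi 0) := integrable_aux ha0 hr
  have hIntg : MeasureTheory.IntegrableOn
      (fun s : ℝ => Real.exp (-r) * ((2:ℝ)^a * (s^(2*a) * Real.exp (-(r*s))) +
        (4:ℝ)^a * (s^a * Real.exp (-(r*s))))) (Set.Ioi 0) :=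
    (((hInt1.const_mul _).add (hInt2.const_mul _)).const_mul _)
  have step := MeasureTheory.integral_mono_of_nonneg (μ := MeasureTheory.volume.restrict (Set.Ioi 0))
    (f := fun s : ℝ => Real.exp (-r * (s+1)) * ((s+1)^2 - 1) ^ a)
    (g := fun s : ℝ => Real.exp (-r) * ((2:ℝ)^a * (s^(2*a) * Real.exp (-(r*s))) +
        (4:ℝ)^a * (s^a * Real.exp (-(r*s)))))
    ?_ hIntg ?_
  · refine step.trans_eq ?_
    rw [MeasureTheory.integral_const_mul,
      MeasureTheory.integral_add (hInt1.const_mul _) (hInt2.const_mul _),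
      MeasureTheory.integral_const_mul, MeasureTheory.integral_const_mul]
    have hA : ∫ s in Set.Ioi (0:ℝ), s ^ (2*a) * Real.exp (-(r*s))
        = (1/r) ^ (2*μ) * Real.Gamma (2*μ) := by
      have h := Real.integral_rpow_mul_exp_neg_mul_Ioi (a := 2*μ) (by linarith) hr0
      rw [← h]
      congr 1 with s
      congr 2
      simp [ha]; ring
    have hB : ∫ s in Set.Ioi (0:ℝ), s ^ a * Real.exp (-(r*s))
        = (1/r) ^ (μ + 1/2) * Real.Gamma (μ + 1/2) := by
      have h := Real.integral_rpow_mul_exp_neg_mul_Ioi (a := μ + 1/2) (by linarith) hr0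
      rw [← h]
      congr 1 with s
      congr 2
      simp [ha]; ring
    rw [hA, hB]
  · filter_upwards [MeasureTheory.ae_restrict_mem measurableSet_Ioi] with s hs
    have hs0 : (0:ℝ) < s := hs
    have h1 : (0:ℝ) < (s+1)^2 - 1 := by nlinarith
    positivity
  · filter_upwards [MeasureTheory.ae_restrict_mem measurableSet_Ioi] with s hs
    have hs0 : (0:ℝ) < s := hs
    have h1 : ((s+1)^2 - 1 : ℝ) = s * (s+2) := by ring
    have h2 : Real.exp (-r*(s+1)) = Real.exp (-r) * Real.exp (-(r*s)) := by
      rw [← Real.exp_add]; ring_nf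
    have h3 : (s*(s+2))^a = s^a * (s+2)^a := Real.mul_rpow hs0.le (by linarith)
    have h4 : (s+2)^a ≤ (2*s)^a + (4:ℝ)^a := by
      rcases le_total s 2 with h | h
      · refine le_add_of_nonneg_of_le (Real.rpow_nonneg (by linarith) a) ?_
        exact Real.rpow_le_rpow (by linarith) (by linarith) ha0
      · refine le_add_of_le_of_nonneg ?_ (Real.rpow_nonneg (by norm_num) a)
        exact Real.rpow_le_rpow (by linarith) (by linarith) ha0
    have h5 : (2*s)^a = 2^a * s^a := Real.mul_rpow (by norm_num) hs0.le
    have h6 : s^a * s^a = s^(2*a) := by rw [two_mul, Real.rpow_add hs0]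
    calc Real.exp (-r * (s+1)) * ((s+1)^2 - 1) ^ a
        = Real.exp (-r) * (Real.exp (-(r*s)) * (s^a * (s+2)^a)) := by
          rw [h1, h2, h3]; ring
      _ ≤ Real.exp (-r) * (Real.exp (-(r*s)) * (s^a * ((2*s)^a + (4:ℝ)^a))) := by
          have hsa : (0:ℝ) ≤ s^a := Real.rpow_nonneg hs0.le a
          gcongr
      _ = Real.exp (-r) * ((2:ℝ)^a * (s^(2*a) * Real.exp (-(r*s))) +
            (4:ℝ)^a * (s^a * Real.exp (-(r*s)))) := by
          rw [h5, ← h6]; ring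

/-- The modified Bessel function of the second kind, via the integral representation
`K_μ(r) = (π^{1/2} 2^{-μ} r^{μ} / Γ(μ + 1/2)) · ∫_{1}^{∞} e^{-rt} (t² - 1)^{μ - 1/2} dt`. -/
noncomputable def besselK (μ r : ℝ) : ℝ :=
  (Real.sqrt π * 2 ^ (-μ) * r ^ μ / Real.Gamma (μ + 1 / 2)) *
    ∫ t in Set.Ioi (1 : ℝ), Real.exp (-r * t) * (t ^ 2 - 1) ^ (μ - 1 / 2)

/-- There is `C > 0` such that for all `μ ≥ 1/2` and `r ≥ 1`,
`K_μ(r) ≤ C · e^{-r} r^{-μ} Γ(μ+1/2)^{-1} · max((2r)^{μ-1/2} Γ(μ+1/2), Γ(2μ))`. -/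
theorem statement8 :
    ∃ C : ℝ, 0 < C ∧ ∀ μ r : ℝ, 1 / 2 ≤ μ → 1 ≤ r →
      besselK μ r ≤ C * Real.exp (-r) * r ^ (-μ) * (Real.Gamma (μ + 1 / 2))⁻¹ *
        max ((2 * r) ^ (μ - 1 / 2) * Real.Gamma (μ + 1 / 2)) (Real.Gamma (2 * μ)) := by
  refine ⟨3, by norm_num, fun μ r hμ hr => ?_⟩
  have hr0 : (0:ℝ) < r := by linarith
  have hG : 0 < Real.Gamma (μ + 1/2) := Real.Gamma_pos_of_pos (by linarith)
  have hG2 : 0 < Real.Gamma (2*μ) := Real.Gamma_pos_of_pos (by linarith)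
  set G := Real.Gamma (μ + 1/2) with hGdef
  set E := Real.exp (-r) with hEdef
  have hE : 0 < E := Real.exp_pos _
  set M := max ((2 * r) ^ (μ - 1/2) * G) (Real.Gamma (2*μ)) with hMdef
  have hM : 0 < M := lt_max_of_lt_right hG2
  have hc : 0 ≤ Real.sqrt π * 2 ^ (-μ) * r ^ μ / G := by positivity
  -- coefficient bound
  have hK : Real.sqrt π * (2:ℝ) ^ (-(1/2):ℝ) ≤ 3/2 := by
    have h1 : Real.sqrt π ≤ 2 := by
      have : Real.sqrt π ≤ Real.sqrt 4 := Real.sqrt_le_sqrt Real.pi_le_four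
      rwa [show (4:ℝ) = 2^2 by norm_num, Real.sqrt_sq (by norm_num : (0:ℝ) ≤ 2)] at this
    have h2 : (2:ℝ) ^ (-(1/2):ℝ) ≤ 3/4 := by
      rw [Real.rpow_neg (by norm_num : (0:ℝ) ≤ 2), ← Real.sqrt_eq_rpow]
      have hs2 : (4/3:ℝ) ≤ Real.sqrt 2 := by
        nlinarith [Real.sq_sqrt (show (0:ℝ) ≤ 2 by norm_num), Real.sqrt_nonneg 2]
      have hs2p : (0:ℝ) < Real.sqrt 2 := by linarith
      rw [inv_le_comm₀ hs2p (by norm_num)]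
      linarith
    nlinarith [Real.sqrt_nonneg π, Real.rpow_nonneg (show (0:ℝ) ≤ 2 by norm_num) (-(1/2):ℝ)]
  -- rpow algebra
  have H1 : (2:ℝ)^(-μ) * (2:ℝ)^(μ - 1/2) * (r^μ * (1/r)^(2*μ))
      = (2:ℝ)^(-(1/2):ℝ) * r^(-μ) := by
    rw [← Real.rpow_add two_pos, one_div r, Real.inv_rpow hr0.le, ← Real.rpow_neg hr0.le,
      ← Real.rpow_add hr0, show -μ + (μ - 1/2) = -(1/2:ℝ) by ring,
      show μ + -(2*μ) = -μ by ring]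
  have H2 : (2:ℝ)^(-μ) * (4:ℝ)^(μ - 1/2) * (r^μ * (1/r)^(μ + 1/2))
      = (2:ℝ)^(-(1/2):ℝ) * ((2*r)^(μ - 1/2) * r^(-μ)) := by
    have h42 : (4:ℝ)^(μ - 1/2) = (2:ℝ)^(2*(μ - 1/2)) := by
      rw [show (4:ℝ) = (2:ℝ)^(2:ℝ) by
        rw [show (2:ℝ) = ((2:ℕ):ℝ) by norm_num, Real.rpow_natCast]; norm_num,
        ← Real.rpow_mul (by norm_num : (0:ℝ) ≤ 2)]
    have h2r : (2*r)^(μ - 1/2) = (2:ℝ)^(μ - 1/2) * r^(μ - 1/2) :=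
      Real.mul_rpow (by norm_num) hr0.le
    have e2 : (2:ℝ)^(-(1/2):ℝ) * (2:ℝ)^(μ - 1/2) = (2:ℝ)^(-μ + 2*(μ - 1/2)) := by
      rw [← Real.rpow_add two_pos, show (-(1/2:ℝ)) + (μ - 1/2) = -μ + 2*(μ - 1/2) by ring]
    have e3 : r^(μ - 1/2) * r^(-μ) = r^(μ + -(μ + 1/2)) := by
      rw [← Real.rpow_add hr0, show (μ - 1/2) + -μ = μ + -(μ + 1/2) by ring]
    rw [h42, h2r, ← Real.rpow_add two_pos, one_div r, Real.inv_rpow hr0.le,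
      ← Real.rpow_neg hr0.le, ← Real.rpow_add hr0, ← e2, ← e3]
    ring
  -- main chain
  have hIb := I_bound hμ hr
  have step1 : besselK μ r ≤ (Real.sqrt π * 2 ^ (-μ) * r ^ μ / G) *
      (E * ((2:ℝ) ^ (μ - 1/2) * ((1/r) ^ (2*μ) * Real.Gamma (2*μ)) +
        (4:ℝ) ^ (μ - 1/2) * ((1/r) ^ (μ + 1/2) * G))) := by
    rw [besselK]
    exact mul_le_mul_of_nonneg_left hIb hc
  have step2 : (Real.sqrt π * 2 ^ (-μ) * r ^ μ / G) *
      (E * ((2:ℝ) ^ (μ - 1/2) * ((1/r) ^ (2*μ) * Real.Gamma (2*μ)) +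
        (4:ℝ) ^ (μ - 1/2) * ((1/r) ^ (μ + 1/2) * G)))
      = Real.sqrt π * (2:ℝ)^(-(1/2):ℝ) * (E * r^(-μ) * G⁻¹ * Real.Gamma (2*μ)) +
        Real.sqrt π * (2:ℝ)^(-(1/2):ℝ) * (E * r^(-μ) * G⁻¹ * ((2*r)^(μ - 1/2) * G)) := by
    rw [div_eq_mul_inv]
    linear_combination (Real.sqrt π * E * Real.Gamma (2*μ) * G⁻¹) * H1 +
      (Real.sqrt π * E * G * G⁻¹) * H2
  have hterm1 : Real.sqrt π * (2:ℝ)^(-(1/2):ℝ) * (E * r^(-μ) * G⁻¹ * Real.Gamma (2*μ))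
      ≤ (3/2) * (E * r^(-μ) * G⁻¹ * M) := by
    have hP : 0 ≤ E * r^(-μ) * G⁻¹ := by positivity
    have := le_max_right ((2 * r) ^ (μ - 1/2) * G) (Real.Gamma (2*μ))
    have h1 : E * r^(-μ) * G⁻¹ * Real.Gamma (2*μ) ≤ E * r^(-μ) * G⁻¹ * M :=
      mul_le_mul_of_nonneg_left this hP
    calc Real.sqrt π * (2:ℝ)^(-(1/2):ℝ) * (E * r^(-μ) * G⁻¹ * Real.Gamma (2*μ))
        ≤ (3/2) * (E * r^(-μ) * G⁻¹ * Real.Gamma (2*μ)) :=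
          mul_le_mul_of_nonneg_right hK (by positivity)
      _ ≤ (3/2) * (E * r^(-μ) * G⁻¹ * M) := by linarith
  have hterm2 : Real.sqrt π * (2:ℝ)^(-(1/2):ℝ) * (E * r^(-μ) * G⁻¹ * ((2*r)^(μ - 1/2) * G))
      ≤ (3/2) * (E * r^(-μ) * G⁻¹ * M) := by
    have hP : 0 ≤ E * r^(-μ) * G⁻¹ := by positivity
    have := le_max_left ((2 * r) ^ (μ - 1/2) * G) (Real.Gamma (2*μ))
    have h1 : E * r^(-μ) * G⁻¹ * ((2*r)^(μ - 1/2) * G) ≤ E * r^(-μ) * G⁻¹ * M :=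
      mul_le_mul_of_nonneg_left this hP
    have hnn : 0 ≤ E * r^(-μ) * G⁻¹ * ((2*r)^(μ - 1/2) * G) := by positivity
    calc Real.sqrt π * (2:ℝ)^(-(1/2):ℝ) * (E * r^(-μ) * G⁻¹ * ((2*r)^(μ - 1/2) * G))
        ≤ (3/2) * (E * r^(-μ) * G⁻¹ * ((2*r)^(μ - 1/2) * G)) :=
          mul_le_mul_of_nonneg_right hK hnn
      _ ≤ (3/2) * (E * r^(-μ) * G⁻¹ * M) := by linarith
  calc besselK μ r ≤ _ := step1
    _ = _ := step2
    _ ≤ (3/2) * (E * r^(-μ) * G⁻¹ * M) + (3/2) * (E * r^(-μ) * G⁻¹ * M) :=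
        add_le_add hterm1 hterm2
    _ = 3 * E * r^(-μ) * G⁻¹ * M := by ring
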